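/- Let γ > 0, and suppose v_T = (1/4) Σ_{t=1}^T t · w_t where each w_t = (Σ_{s≤t} s)^{-1} A^T(Σ_{s<t} s·p_s + t·p_{t-1}) with p_s ∈ Δ^n, and there exists w* with ‖w*‖_2 = 1 and min_{p∈Δ^n} p^T A w* ≥ γ. Then ‖v_T‖_2 ≥ T(T+1)γ/8. -/
import Mathlib

lemma sumIccId (m : ℕ) : ∑ s ∈ Finset.Icc 1 m, (s : ℝ) = m * (m + 1) / 2 := by
  induction m with
  | zero => simp
  | succ k ih =>
    rw [Finset.sum_Icc_succ_top (by omega : 1 ≤ k + 1), ih]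
    push_cast; ring

theorem vT_norm_lower_bound {n d T : ℕ} (hT : 1 ≤ T) (γ : ℝ) (hγ : 0 < γ)
    (A : Matrix (Fin n) (Fin d) ℝ)
    (p : ℕ → (Fin n → ℝ)) (hp : ∀ t, p t ∈ stdSimplex ℝ (Fin n))
    (w : ℕ → (Fin d → ℝ))
    (hw : ∀ t, 1 ≤ t → w t = (((t : ℝ) * (t + 1)) / 2)⁻¹ •
      A.transpose.mulVec
        (∑ s ∈ Finset.Icc 1 (t - 1), (s : ℝ) • p s + (t : ℝ) • p (t - 1)))
    (wstar : Fin d → ℝ)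
    (hnorm : Real.sqrt (∑ j, (wstar j) ^ 2) = 1)
    (hmargin : ∀ q ∈ stdSimplex ℝ (Fin n), γ ≤ ∑ i, q i * A.mulVec wstar i)
    (v : Fin d → ℝ)
    (hv : v = (1 / 4 : ℝ) • ∑ t ∈ Finset.Icc 1 T, (t : ℝ) • w t) :
    (T : ℝ) * (T + 1) * γ / 8 ≤ Real.sqrt (∑ j, (v j) ^ 2) := by
  -- Step 1: each w t has inner product with w* at least γ
  have key : ∀ t ∈ Finset.Icc 1 T, γ ≤ ∑ j, w t j * wstar j := by
    intro t ht
    simp only [Finset.mem_Icc] at ht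
    obtain ⟨ht1, _⟩ := ht
    set c : ℝ := ((t : ℝ) * (t + 1)) / 2 with hc
    have hcpos : 0 < c := by
      have : (1 : ℝ) ≤ (t : ℝ) := by exact_mod_cast ht1
      positivity
    set u : Fin n → ℝ := ∑ s ∈ Finset.Icc 1 (t - 1), (s : ℝ) • p s + (t : ℝ) • p (t - 1) with hu
    set q : Fin n → ℝ := c⁻¹ • u with hq
    have hqmem : q ∈ stdSimplex ℝ (Fin n) := by
      constructor
      · intro i
        have hui : 0 ≤ u i := by
          simp only [hu, Pi.add_apply, Finset.sum_apply, Pi.smul_apply, smul_eq_mul]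
          have h1 : 0 ≤ ∑ s ∈ Finset.Icc 1 (t-1), (s : ℝ) * p s i :=
            Finset.sum_nonneg fun s _ => mul_nonneg (by positivity) ((hp s).1 i)
          have h2 : 0 ≤ (t : ℝ) * p (t-1) i := mul_nonneg (by positivity) ((hp (t-1)).1 i)
          linarith
        exact mul_nonneg (le_of_lt (inv_pos.2 hcpos)) hui
      · have hsumu : ∑ i, u i = c := by
          simp only [hu, Pi.add_apply, Finset.sum_apply, Pi.smul_apply, smul_eq_mul,
            Finset.sum_add_distrib]
          rw [Finset.sum_comm]
          have e1 : ∀ s : ℕ, ∑ i, (s : ℝ) * p s i = (s : ℝ) := by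
            intro s; rw [← Finset.mul_sum, (hp s).2, mul_one]
          rw [Finset.sum_congr rfl fun s _ => e1 s, ← Finset.mul_sum, (hp (t-1)).2, mul_one,
            sumIccId]
          obtain ⟨m, rfl⟩ : ∃ m, t = m + 1 := ⟨t - 1, by omega⟩
          simp only [Nat.add_sub_cancel, hc]
          push_cast; ring
        simp only [hq, Pi.smul_apply, smul_eq_mul, ← Finset.mul_sum, hsumu]
        field_simp
    have hmq := hmargin q hqmem
    have hexp : ∑ j, w t j * wstar j = ∑ i, q i * A.mulVec wstar i := by
      rw [hw t ht1, ← hu]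
      simp only [Pi.smul_apply, smul_eq_mul]
      have : ∑ j, c⁻¹ * A.transpose.mulVec u j * wstar j
          = c⁻¹ * ∑ j, A.transpose.mulVec u j * wstar j := by
        rw [Finset.mul_sum]; congr 1; ext j; ring
      rw [this]
      simp only [Matrix.mulVec, Matrix.transpose_apply, dotProduct]
      rw [Finset.mul_sum]
      have : ∀ j, c⁻¹ * ((∑ i, A i j * u i) * wstar j)
          = ∑ i, c⁻¹ * u i * (A i j * wstar j) := by
        intro j; rw [Finset.sum_mul, Finset.mul_sum]; congr 1; ext i; ring
      rw [Finset.sum_congr rfl fun j _ => this j, Finset.sum_comm]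
      apply Finset.sum_congr rfl; intro i _
      simp only [hq, Pi.smul_apply, smul_eq_mul, ← Finset.mul_sum]
    rw [hexp]; exact hmq
  -- Step 2: inner product of v with w*
  have hinner : (T : ℝ) * (T + 1) * γ / 8 ≤ ∑ j, v j * wstar j := by
    have hexp : ∑ j, v j * wstar j
        = (1/4 : ℝ) * ∑ t ∈ Finset.Icc 1 T, (t : ℝ) * ∑ j, w t j * wstar j := by
      calc ∑ j, v j * wstar j
          = ∑ j, ∑ t ∈ Finset.Icc 1 T, 1/4 * ((t : ℝ) * (w t j * wstar j)) := by
            rw [hv]; apply Finset.sum_congr rfl; intro j _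
            simp only [Pi.smul_apply, Finset.sum_apply, smul_eq_mul, Finset.mul_sum,
              Finset.sum_mul]
            apply Finset.sum_congr rfl; intro t _; ring
        _ = ∑ t ∈ Finset.Icc 1 T, ∑ j, 1/4 * ((t : ℝ) * (w t j * wstar j)) :=
            Finset.sum_comm
        _ = (1/4 : ℝ) * ∑ t ∈ Finset.Icc 1 T, (t : ℝ) * ∑ j, w t j * wstar j := by
            simp only [Finset.mul_sum]
    rw [hexp]
    have hbound : ∑ t ∈ Finset.Icc 1 T, (t : ℝ) * γ
        ≤ ∑ t ∈ Finset.Icc 1 T, (t : ℝ) * ∑ j, w t j * wstar j := by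
      apply Finset.sum_le_sum
      intro t ht
      exact mul_le_mul_of_nonneg_left (key t ht) (by positivity)
    have hgauss : ∑ t ∈ Finset.Icc 1 T, (t : ℝ) * γ = T * (T + 1) / 2 * γ := by
      rw [← Finset.sum_mul, sumIccId]
    nlinarith [hbound, hgauss]
  -- Step 3: Cauchy–Schwarz
  have hcs : ∑ j, v j * wstar j ≤ Real.sqrt (∑ j, (v j)^2) := by
    have h := Finset.sum_mul_sq_le_sq_mul_sq Finset.univ v wstar
    have h1 : ∑ j, v j * wstar j ≤ Real.sqrt ((∑ j, v j * wstar j)^2) := by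
      rw [Real.sqrt_sq_eq_abs]; exact le_abs_self _
    have h2 : Real.sqrt ((∑ j, v j * wstar j)^2)
        ≤ Real.sqrt ((∑ j, (v j)^2) * ∑ j, (wstar j)^2) :=
      Real.sqrt_le_sqrt h
    rw [Real.sqrt_mul (by positivity), hnorm, mul_one] at h2
    linarith
  linarith
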